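/- If G is a dually chordal graph, then the transformed graph G' (obtained by adding a true twin for each vertex and adding edges between original vertices at distance 2, as follows: V(G') = V1 ∪ V2, two copies of V(G); v1 ∈ V1 adjacent to u2 ∈ V2 iff u ∈ N_G[v]; v2 adjacent to u2 in V2 iff 1 ≤ d_G(u,v) ≤ 2; V1 independent) is also dually chordal. -/

import Mathlib

open SimpleGraph

/-- `D` is a dominating set of `G`. -/
def IsDomSet {V : Type*} [DecidableEq V] (G : SimpleGraph V) (D : Finset V) : Prop :=
  ∀ v, v ∉ D → ∃ u ∈ D, G.Adj u v

/-- `D` is a total dominating set of `G`. -/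
def IsTotDomSet {V : Type*} [DecidableEq V] (G : SimpleGraph V) (D : Finset V) : Prop :=
  ∀ v : V, ∃ u ∈ D, G.Adj u v

/-- `u` and `v` are distinct and within distance at most 2 in `G`. -/
def WithinTwo {V : Type*} (G : SimpleGraph V) (u v : V) : Prop :=
  G.Adj u v ∨ ∃ w, G.Adj u w ∧ G.Adj w v

/-- `D` is a semitotal dominating set of `G`. -/
def IsSemiTDSet {V : Type*} [DecidableEq V] (G : SimpleGraph V) (D : Finset V) : Prop :=
  IsDomSet G D ∧ ∀ v ∈ D, ∃ u ∈ D, u ≠ v ∧ WithinTwo G u v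

/-- The domination number of `G`. -/
noncomputable def gamma {V : Type*} [Fintype V] [DecidableEq V] (G : SimpleGraph V) : ℕ :=
  sInf {n | ∃ D : Finset V, IsDomSet G D ∧ D.card = n}

/-- The total domination number of `G`. -/
noncomputable def gammaT {V : Type*} [Fintype V] [DecidableEq V] (G : SimpleGraph V) : ℕ :=
  sInf {n | ∃ D : Finset V, IsTotDomSet G D ∧ D.card = n}

/-- The semitotal domination number of `G`. -/
noncomputable def gammaT2 {V : Type*} [Fintype V] [DecidableEq V] (G : SimpleGraph V) : ℕ :=
  sInf {n | ∃ D : Finset V, IsSemiTDSet G D ∧ D.card = n}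

/-- `H` is dually chordal: there is a spanning tree `T` of `H` such that every closed
neighbourhood induces a subtree of `T`. -/
def DuallyChordal {W : Type*} (H : SimpleGraph W) : Prop :=
  ∃ T : SimpleGraph W, T ≤ H ∧ T.IsTree ∧
    ∀ z : W, (SimpleGraph.induce {v : W | v = z ∨ H.Adj z v} T).Connected

/-- The transformed graph `G'` on `V ⊕ V`. -/
def transform {V : Type*} (G : SimpleGraph V) : SimpleGraph (V ⊕ V) :=
  SimpleGraph.fromRel (fun a b =>
    match a, b with
    | Sum.inl v, Sum.inr u => u = v ∨ G.Adj v u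
    | Sum.inr v, Sum.inr u => G.Adj v u ∨ ∃ w, G.Adj v w ∧ G.Adj w u
    | _, _ => False)

/-!
Let `T` be a spanning tree of `G` all of whose closed neighbourhoods `N[z]` are subtrees. Keep `T`
on the second copy of `V` and hang each vertex of the first copy as a leaf on its twin: this is a
spanning tree of the transform. The closed neighbourhood of `inl v` is `N[v]` in the second copy
plus the leaf `inl v`. The closed neighbourhood of `inr v` is the closed `2`-ball around `v` in the
second copy plus the leaves over `N[v]`; that ball is the union of the subtrees `N[w]`,
`w ∈ N[v]`, all of which contain `v`, so it is again a subtree.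
-/

namespace SimpleGraph

variable {V : Type*}

section

variable {G : SimpleGraph V}

lemma Walk.IsCycle.not_subsingleton_neighborSet {u v : V} {c : G.Walk u u} (hc : c.IsCycle)
    (hv : v ∈ c.support) : ¬ (G.neighborSet v).Subsingleton := fun hsub => by
  have htwo := hc.ncard_neighborSet_toSubgraph_eq_two hv
  have hsub' := hsub.anti (c.toSubgraph.neighborSet_subset v)
  have hle := (Set.ncard_le_one hsub'.finite).mpr hsub'
  omega

lemma IsAcyclic.of_induce_of_subsingleton_neighborSet {s : Set V} (h : (G.induce s).IsAcyclic)
    (hs : ∀ v ∉ s, (G.neighborSet v).Subsingleton) : G.IsAcyclic := by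
  intro u c hc
  have hsupp : ∀ x ∈ c.support, x ∈ s := fun x hx =>
    by_contra fun hxs => hc.not_subsingleton_neighborSet hx (hs x hxs)
  refine h (c.induce s hsupp) ?_
  rwa [← Walk.isCycle_map_iff_of_injective (f := (Embedding.induce s).toHom)
    Subtype.coe_injective, Walk.map_induce]

lemma connected_induce_iUnion_closedNeighborSet {T : SimpleGraph V}
    (hN : ∀ w, (T.induce (insert w (G.neighborSet w))).Connected) (v : V) :
    (T.induce (⋃ w ∈ insert v (G.neighborSet v), insert w (G.neighborSet w))).Connected := by
  refine T.induce_connected_of_patches v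
    (Set.mem_biUnion (Set.mem_insert v _) (Set.mem_insert v _)) fun {x} hx => ?_
  obtain ⟨w, hw, hxw⟩ := Set.mem_iUnion₂.mp hx
  have hvw : v ∈ insert w (G.neighborSet w) := by
    rcases hw with rfl | hw
    · exact Set.mem_insert _ _
    · exact Or.inr hw.symm
  exact ⟨_, Set.subset_biUnion_of_mem hw, hvw, hxw, (hN w).preconnected _ _⟩

end

variable (T : SimpleGraph V)

/-- `T` on the right copy of `V`, with `Sum.inl v` hung as a leaf on `Sum.inr v`. -/
def withLeaves : SimpleGraph (V ⊕ V) where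
  Adj
    | .inl v, .inr u | .inr u, .inl v => u = v
    | .inr v, .inr u => T.Adj v u
    | .inl _, .inl _ => False
  symm := ⟨by
    rintro (v | v) (u | u) h
    exacts [h, h, h, h.symm]⟩
  loopless := ⟨by
    rintro (v | v) h
    exacts [h, T.loopless.irrefl v h]⟩

def embeddingWithLeaves : T ↪g T.withLeaves where
  toEmbedding := .inr
  map_rel_iff' := Iff.rfl

variable {T}

lemma withLeaves_adj_inl_inr (v : V) : T.withLeaves.Adj (.inl v) (.inr v) := rfl

lemma subsingleton_neighborSet_withLeaves_inl (v : V) :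
    (T.withLeaves.neighborSet (.inl v)).Subsingleton := by
  rintro (x | x) hx (y | y) hy
  exacts [hx.elim, hx.elim, hy.elim, by rw [show x = v from hx, show y = v from hy]]

lemma connected_induce_withLeaves {A B : Set V} (hA : (T.induce A).Connected) (hBA : B ⊆ A) :
    (T.withLeaves.induce (Sum.inr '' A ∪ Sum.inl '' B)).Connected := by
  obtain ⟨⟨a₀, ha₀⟩⟩ := hA.nonempty
  let f : T.induce A →g T.withLeaves.induce (Sum.inr '' A ∪ Sum.inl '' B) :=
    ⟨fun a => ⟨.inr a, .inl ⟨a, a.2, rfl⟩⟩, id⟩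
  have hreach : ∀ a (ha : a ∈ A), (T.withLeaves.induce _).Reachable (f ⟨a₀, ha₀⟩) (f ⟨a, ha⟩) :=
    fun a ha => (hA.preconnected _ _).map f
  rw [connected_iff_exists_forall_reachable]
  refine ⟨f ⟨a₀, ha₀⟩, ?_⟩
  rintro ⟨_, ⟨a, ha, rfl⟩ | ⟨b, hb, rfl⟩⟩
  · exact hreach a ha
  · exact (hreach b (hBA hb)).trans (Adj.reachable (withLeaves_adj_inl_inr (T := T) b).symm)

lemma IsTree.withLeaves (hT : T.IsTree) : T.withLeaves.IsTree := by
  refine ⟨?_, ?_⟩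
  · have h := connected_induce_withLeaves (induceUnivIso T |>.connected_iff.mpr hT.connected)
      (Set.subset_univ Set.univ)
    rwa [Set.image_univ, Set.image_univ, Set.range_inr_union_range_inl,
      (induceUnivIso _).connected_iff] at h
  · refine IsAcyclic.of_induce_of_subsingleton_neighborSet (s := Set.range Sum.inr)
      (hT.isAcyclic.embedding (embeddingWithLeaves T).isoInduceRange.symm.toEmbedding) ?_
    rintro (v | v) hv
    · exact subsingleton_neighborSet_withLeaves_inl v
    · exact (hv ⟨v, rfl⟩).elim

end SimpleGraph

section Transform

variable {V : Type*} {G : SimpleGraph V}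

lemma withLeaves_le_transform {T : SimpleGraph V} (hTG : T ≤ G) : T.withLeaves ≤ transform G := by
  rintro (v | v) (u | u) h <;> simp_all [withLeaves, transform]
  exact ⟨h.ne, .inl (.inl (hTG h))⟩

lemma closedNbhd_transform_inl (v : V) :
    {x | x = Sum.inl v ∨ (transform G).Adj (Sum.inl v) x} =
      Sum.inr '' insert v (G.neighborSet v) ∪ Sum.inl '' {v} := by
  ext (x | x) <;> simp [transform]

lemma closedNbhd_transform_inr (v : V) :
    {x | x = Sum.inr v ∨ (transform G).Adj (Sum.inr v) x} =
      Sum.inr '' (⋃ w ∈ insert v (G.neighborSet v), insert w (G.neighborSet w)) ∪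
        Sum.inl '' insert v (G.neighborSet v) := by
  ext (x | x)
  · simp [transform, eq_comm, G.adj_comm]
  · simp [transform]
    grind [G.adj_comm, G.ne_of_adj]

end Transform

theorem transform_duallyChordal_general {V : Type*}
    (G : SimpleGraph V) (hdc : DuallyChordal G) :
    DuallyChordal (transform G) := by
  obtain ⟨T, hTG, hT, hN⟩ := hdc
  refine ⟨T.withLeaves, withLeaves_le_transform hTG, hT.withLeaves, ?_⟩
  rintro (v | v)
  · rw [closedNbhd_transform_inl]
    exact connected_induce_withLeaves (hN v) (Set.singleton_subset_iff.mpr (Set.mem_insert v _))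
  · rw [closedNbhd_transform_inr]
    exact connected_induce_withLeaves (connected_induce_iUnion_closedNeighborSet hN v)
      (Set.subset_biUnion_of_mem (u := fun w => insert w (G.neighborSet w)) (Set.mem_insert v _))

theorem transform_duallyChordal {V : Type*} [Fintype V] [DecidableEq V]
    (G : SimpleGraph V) (hconn : G.Connected) (hdc : DuallyChordal G) :
    DuallyChordal (transform G) :=
  transform_duallyChordal_general G hdc
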